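/- arXiv:2210.01257 — 4 statements merged into one kernel-verified Lean document; each statement's English description precedes it below -/
import Mathlib

section
/- Let B ∈ M(m×n, ℂ), let L ≥ 1 be an integer, and let A_1, …, A_L be any composable sequence of complex matrices with A_L ⋯ A_1 = B. Then (‖B‖^S_{2/L})^{2/L} ≤ (Π_{l=1}^{L} ‖A_l‖_2^2)^{1/L} ≤ (1/L) Σ_{l=1}^{L} ‖A_l‖_2^2. -/
/-!
Write `σ_i(M)` for the singular values of `M` in decreasing order. By Horn's inequality
`∏_{i<k} σ_i(PQ) ≤ ∏_{i<k} σ_i(P) · ∏_{i<k} σ_i(Q)`, iterated along the factorization, the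
sequence `σ_i(B)^{2/L}` is weakly log-majorized by `∏_l σ_i(A_l)^{2/L}`, hence weakly majorized
by it. Hölder's inequality with `L` equal weights and `∑_i σ_i(A)^2 = ‖A‖_2^2` then give the first
inequality; the second one is AM-GM.

Horn's inequality comes from Gram determinants: by the Cauchy–Binet formula in an eigenbasis of
`Mᴴ M`, `det ((M N)ᴴ (M N)) ≤ (∏_{i<k} σ_i(M))^2 · det (Nᴴ N)` for every `N` with `k` columns,
with equality when the columns of `N` are the top `k` right singular vectors of `M`.
-/

open scoped BigOperators

/-- Schatten `p`-norm of a rectangular complex matrix. -/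
noncomputable def schattenNorm {m n : ℕ} (p : ℝ) (A : Matrix (Fin m) (Fin n) ℂ) : ℝ :=
  (∑ i, Real.sqrt ((Matrix.isHermitian_conjTranspose_mul_self A).eigenvalues i) ^ p) ^ (1 / p)

/-- Frobenius (Euclidean) norm of a complex matrix. -/
noncomputable def frobNorm {m n : ℕ} (A : Matrix (Fin m) (Fin n) ℂ) : ℝ :=
  Real.sqrt (∑ i, ∑ j, ‖A i j‖ ^ 2)

/-- Ordered product `A_{L−1} ⋯ A_1 A_0` of a composable sequence of matrices with
dimension profile `d` (so `A l` has size `d (l+1) × d l`). -/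
noncomputable def chainProd (d : ℕ → ℕ) (A : ∀ l : ℕ, Matrix (Fin (d (l + 1))) (Fin (d l)) ℂ) :
    ∀ L : ℕ, Matrix (Fin (d L)) (Fin (d 0)) ℂ
  | 0 => 1
  | (L + 1) => A L * chainProd d A L

open Finset

section Inequalities

theorem sum_range_mul_nonpos_of_antitone {c d : ℕ → ℝ} {n : ℕ} (hc : Antitone c)
    (hc₀ : ∀ i < n, 0 ≤ c i) (hd : ∀ k ≤ n, ∑ i ∈ range k, d i ≤ 0) :
    ∑ i ∈ range n, c i * d i ≤ 0 := by
  rcases n.eq_zero_or_pos with rfl | hn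
  · simp
  have hlast : c (n - 1) * ∑ i ∈ range n, d i ≤ 0 :=
    mul_nonpos_of_nonneg_of_nonpos (hc₀ _ (by omega)) (hd n le_rfl)
  have hsteps : 0 ≤ ∑ i ∈ range (n - 1), (c (i + 1) - c i) * ∑ j ∈ range (i + 1), d j :=
    sum_nonneg fun i hi => mul_nonneg_of_nonpos_of_nonpos (sub_nonpos.2 (hc i.le_succ))
      (hd _ (by rw [mem_range] at hi; omega))
  have hparts := sum_range_by_parts c d n
  simp only [smul_eq_mul] at hparts
  rw [hparts]
  linarith

theorem sum_range_le_of_prod_range_le_of_pos {x y : ℕ → ℝ} {n : ℕ} (hx : Antitone x)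
    (hx₀ : ∀ i < n, 0 < x i) (hy₀ : ∀ i < n, 0 < y i)
    (hxy : ∀ k ≤ n, ∏ i ∈ range k, x i ≤ ∏ i ∈ range k, y i) :
    ∑ i ∈ range n, x i ≤ ∑ i ∈ range n, y i := by
  have hlog : ∀ k ≤ n, ∑ i ∈ range k, (Real.log (x i) - Real.log (y i)) ≤ 0 := by
    intro k hk
    have hne : ∀ z : ℕ → ℝ, (∀ i < n, 0 < z i) → ∀ i ∈ range k, z i ≠ 0 :=
      fun z hz i hi => (hz i ((mem_range.1 hi).trans_le hk)).ne'
    rw [sum_sub_distrib, ← Real.log_prod (hne x hx₀), ← Real.log_prod (hne y hy₀), sub_nonpos]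
    exact Real.log_le_log (prod_pos fun i hi => hx₀ i ((mem_range.1 hi).trans_le hk)) (hxy k hk)
  -- `x - y ≤ x (log x - log y)` is `log t ≤ t - 1` at `t = y / x`.
  have hterm : ∀ i ∈ range n, x i - y i ≤ x i * (Real.log (x i) - Real.log (y i)) := by
    intro i hi
    have hxi := hx₀ i (mem_range.1 hi)
    have hyi := hy₀ i (mem_range.1 hi)
    have h := Real.log_le_sub_one_of_pos (div_pos hyi hxi)
    rw [Real.log_div hyi.ne' hxi.ne'] at h
    have hmul := mul_le_mul_of_nonneg_left h hxi.le
    have hcancel : x i * (y i / x i - 1) = y i - x i := by field_simp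
    linarith
  have := (sum_le_sum hterm).trans
    (sum_range_mul_nonpos_of_antitone hx (fun i hi => (hx₀ i hi).le) hlog)
  rw [sum_sub_distrib] at this
  linarith

/-- Weak log-majorization implies weak majorization. -/
theorem sum_range_le_of_prod_range_le {x y : ℕ → ℝ} {n : ℕ} (hx : Antitone x)
    (hx₀ : ∀ i, 0 ≤ x i) (hy₀ : ∀ i, 0 ≤ y i)
    (hxy : ∀ k ≤ n, ∏ i ∈ range k, x i ≤ ∏ i ∈ range k, y i) :
    ∑ i ∈ range n, x i ≤ ∑ i ∈ range n, y i := by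
  induction n with
  | zero => simp
  | succ m ih =>
    by_cases hxm : x m = 0
    · rw [sum_range_succ, sum_range_succ, hxm]
      linarith [ih fun k hk => hxy k (by omega), hy₀ m]
    have hxpos : ∀ i < m + 1, 0 < x i :=
      fun i hi => ((hx₀ m).lt_of_ne' hxm).trans_le (hx (by omega))
    have hypos : ∀ i < m + 1, 0 < y i := by
      intro i hi
      refine (hy₀ i).lt_of_ne' fun hyi => ?_
      have := hxy (i + 1) (by omega)
      rw [prod_eq_zero (mem_range.2 i.lt_succ_self) hyi] at this
      exact this.not_gt (prod_pos fun j hj => hxpos j (by rw [mem_range] at hj; omega))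
    exact sum_range_le_of_prod_range_le_of_pos hx hxpos hypos hxy

/-- **Hölder's inequality** for several finite sequences. -/
theorem sum_prod_rpow_le_prod_sum_rpow {ι κ : Type*} (s : Finset ι) (t : Finset κ)
    {w : κ → ℝ} {z : κ → ι → ℝ} (hw : ∀ l ∈ t, 0 ≤ w l) (hw₁ : ∑ l ∈ t, w l = 1)
    (hz : ∀ l ∈ t, ∀ i ∈ s, 0 ≤ z l i) :
    ∑ i ∈ s, ∏ l ∈ t, z l i ^ w l ≤ ∏ l ∈ t, (∑ i ∈ s, z l i) ^ w l := by
  set S : κ → ℝ := fun l => ∑ i ∈ s, z l i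
  have hS : ∀ l ∈ t, 0 ≤ S l := fun l hl => sum_nonneg (hz l hl)
  by_cases hdeg : ∃ l ∈ t, S l = 0 ∧ w l ≠ 0
  · obtain ⟨l, hl, hSl, hwl⟩ := hdeg
    have hzl : ∀ i ∈ s, z l i = 0 := (sum_eq_zero_iff_of_nonneg (hz l hl)).1 hSl
    rw [sum_eq_zero fun i hi => prod_eq_zero hl (by rw [hzl i hi, Real.zero_rpow hwl])]
    exact prod_nonneg fun l hl => Real.rpow_nonneg (hS l hl) _
  push Not at hdeg
  have hsplit : ∀ i ∈ s, ∏ l ∈ t, z l i ^ w l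
      = (∏ l ∈ t, S l ^ w l) * ∏ l ∈ t, (z l i / S l) ^ w l := by
    intro i hi
    rw [← prod_mul_distrib]
    refine prod_congr rfl fun l hl => ?_
    by_cases hSl : S l = 0
    · simp [hdeg l hl hSl]
    rw [← Real.mul_rpow (hS l hl) (div_nonneg (hz l hl i hi) (hS l hl)), mul_div_cancel₀ _ hSl]
  -- Once every row is normalized to sum `1`, this is AM-GM summed over `i`.
  have hnormalized : ∑ i ∈ s, ∏ l ∈ t, (z l i / S l) ^ w l ≤ 1 := calc
    _ ≤ ∑ i ∈ s, ∑ l ∈ t, w l * (z l i / S l) :=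
      sum_le_sum fun i hi => Real.geom_mean_le_arith_mean_weighted t w _ hw hw₁
        fun l hl => div_nonneg (hz l hl i hi) (hS l hl)
    _ = ∑ l ∈ t, w l * (S l / S l) := by
      rw [sum_comm]
      simp only [← mul_sum, ← sum_div, S]
    _ ≤ ∑ l ∈ t, w l := sum_le_sum fun l hl =>
      mul_le_of_le_one_right (hw l hl) (div_self_le_one _)
    _ = 1 := hw₁
  rw [sum_congr rfl hsplit, ← mul_sum]
  exact mul_le_of_le_one_right (prod_nonneg fun l hl => Real.rpow_nonneg (hS l hl) _) hnormalized

theorem prod_le_prod_range_card_of_antitone {f : ℕ → ℝ} (hf : Antitone f) (hf₀ : ∀ i, 0 ≤ f i)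
    (S : Finset ℕ) : ∏ i ∈ S, f i ≤ ∏ i ∈ range #S, f i := by
  induction S using Finset.induction_on_max with
  | empty => simp
  | insert a S hlt ih =>
    have haS : a ∉ S := fun h => (hlt a h).false
    have hcard : #S ≤ a := by
      simpa using card_le_card (fun x hx => mem_range.2 (hlt x hx) : S ⊆ range a)
    rw [prod_insert haS, card_insert_of_notMem haS, prod_range_succ, mul_comm]
    exact mul_le_mul ih (hf hcard) (hf₀ a) (prod_nonneg fun i _ => hf₀ i)

end Inequalities

namespace Matrix

section CauchyBinet

variable {R : Type*} [CommRing R] {k N : ℕ}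

/-- Every injection `Fin k → Fin N` is, in exactly one way, the increasing enumeration of a
`k`-subset composed with a permutation. -/
private def subsetPermEmb (q : {s : Finset (Fin N) // #s = k} × Equiv.Perm (Fin k)) :
    Fin k → Fin N :=
  q.1.1.orderEmbOfFin q.1.2 ∘ q.2

private theorem range_subsetPermEmb (q : {s : Finset (Fin N) // #s = k} × Equiv.Perm (Fin k)) :
    Set.range (subsetPermEmb q) = q.1.1 := by
  rw [subsetPermEmb, q.2.surjective.range_comp, range_orderEmbOfFin]

private theorem subsetPermEmb_injective :
    Function.Injective (subsetPermEmb (k := k) (N := N)) := by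
  rintro ⟨S, σ⟩ ⟨S', σ'⟩ h
  obtain rfl : S = S' := Subtype.ext (coe_injective <| by
    rw [← range_subsetPermEmb (S, σ), ← range_subsetPermEmb (S', σ'), h])
  exact Prod.ext rfl (Equiv.ext fun i => (S.1.orderEmbOfFin S.2).injective (congrFun h i))

private theorem mem_range_subsetPermEmb {p : Fin k → Fin N} (hp : Function.Injective p) :
    p ∈ Set.range (subsetPermEmb (k := k) (N := N)) := by
  have hS : #(univ.image p) = k := by rw [card_image_of_injective _ hp, card_fin]
  let e := (univ.image p).orderIsoOfFin hS
  let g : Fin k → Fin k := fun i => e.symm ⟨p i, mem_image_of_mem p (mem_univ i)⟩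
  have hg : ∀ i, e (g i) = p i := fun i => by simp [g]
  have hg_inj : Function.Injective g := fun i j hij => hp <| by rw [← hg i, ← hg j, hij]
  refine ⟨(⟨_, hS⟩, Equiv.ofBijective g hg_inj.bijective_of_finite), funext fun i => ?_⟩
  rw [← hg i]
  exact (coe_orderIsoOfFin_apply _ _ _).symm

/-- The **Cauchy–Binet formula**. -/
theorem det_mul_eq_sum_det_submatrix (A : Matrix (Fin k) (Fin N) R)
    (B : Matrix (Fin N) (Fin k) R) :
    (A * B).det = ∑ S : {s : Finset (Fin N) // #s = k},
      (A.submatrix id (S.1.orderEmbOfFin S.2)).det *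
        (B.submatrix (S.1.orderEmbOfFin S.2) id).det := by
  set f : (Fin k → Fin N) → R := fun p => (∏ i, B (p i) i) * (A.submatrix id p).det
  have hexpand : (A * B).det = ∑ p, f p := by
    simp only [f, det_apply', mul_apply, prod_univ_sum, mul_sum, Fintype.piFinset_univ,
      submatrix_apply, id_eq, prod_mul_distrib]
    rw [sum_comm]
    refine sum_congr rfl fun p _ => sum_congr rfl fun σ _ => by ring
  have hvanish : ∀ p ∉ Set.range subsetPermEmb, f p = 0 := by
    intro p hp
    obtain ⟨i, j, hpij, hij⟩ : ∃ i j, p i = p j ∧ i ≠ j := by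
      by_contra! h
      exact hp (mem_range_subsetPermEmb fun i j hpij => h i j hpij)
    have hdet : (A.submatrix id p).det = 0 := det_zero_of_column_eq hij fun x => by simp [hpij]
    simp [f, hdet]
  rw [hexpand, ← Fintype.sum_of_injective _ subsetPermEmb_injective _ f hvanish (fun _ => rfl),
    Fintype.sum_prod_type]
  refine sum_congr rfl fun S _ => ?_
  rw [det_apply' (B.submatrix _ id), mul_sum]
  refine sum_congr rfl fun σ _ => ?_
  have hperm : A.submatrix id (S.1.orderEmbOfFin S.2 ∘ σ)
      = (A.submatrix id (S.1.orderEmbOfFin S.2)).submatrix id σ := rfl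
  simp only [f, subsetPermEmb, hperm, det_permute', submatrix_apply, id_eq, Function.comp_apply]
  ring

end CauchyBinet

section SingularValues

noncomputable def singularValues {𝕜 m n : Type*} [RCLike 𝕜] [Fintype m] [Fintype n]
    [DecidableEq n] (M : Matrix m n 𝕜) : ℕ →₀ ℝ :=
  (toEuclideanLin M).singularValues

variable {𝕜 m n : Type*} [RCLike 𝕜] [Fintype m] [Fintype n] [DecidableEq n]

theorem singularValues_nonneg (M : Matrix m n 𝕜) (i : ℕ) : 0 ≤ M.singularValues i :=
  LinearMap.singularValues_nonneg _ i

theorem singularValues_antitone (M : Matrix m n 𝕜) : Antitone M.singularValues :=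
  LinearMap.singularValues_antitone _

theorem singularValues_of_card_le {M : Matrix m n 𝕜} {i : ℕ} (hi : Fintype.card n ≤ i) :
    M.singularValues i = 0 :=
  LinearMap.singularValues_of_finrank_le _ (by simpa using hi)

end SingularValues

variable {a b c k N : ℕ}

theorem exists_equiv_eigenvalues_eq_sq_singularValues (M : Matrix (Fin a) (Fin b) ℂ) :
    ∃ τ : Fin b ≃ Fin b, ∀ j,
      (isHermitian_conjTranspose_mul_self M).eigenvalues j = M.singularValues (τ j) ^ 2 := by
  refine ⟨(Fintype.equivOfCardEq (Fintype.card_fin _)).symm.trans (finCongr (Fintype.card_fin b)),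
    fun j => ?_⟩
  rw [singularValues, (toEuclideanLin M).sq_singularValues_of_lt finrank_euclideanSpace
    ((Fin.is_lt _).trans_eq (Fintype.card_fin b).symm)]
  unfold IsHermitian.eigenvalues IsHermitian.eigenvalues₀
  congr 1
  rw [← toEuclideanLin_conjTranspose_eq_adjoint]
  exact toLpLin_mul 2 2 2 Mᴴ M

theorem sum_range_sq_singularValues (M : Matrix (Fin a) (Fin b) ℂ) :
    ∑ i ∈ range b, M.singularValues i ^ 2 = ∑ i, ∑ j, ‖M i j‖ ^ 2 := by
  obtain ⟨τ, hτ⟩ := exists_equiv_eigenvalues_eq_sq_singularValues M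
  have htrace := congrArg Complex.re
    (isHermitian_conjTranspose_mul_self M).trace_eq_sum_eigenvalues
  rw [← Fin.sum_univ_eq_sum_range (fun i => M.singularValues i ^ 2), ← τ.sum_comp]
  simp_rw [← hτ]
  simp only [Complex.coe_algebraMap, Complex.re_sum, Complex.ofReal_re] at htrace
  rw [← htrace, trace, Complex.re_sum, sum_comm]
  refine sum_congr rfl fun i _ => ?_
  simp [diag_apply, mul_apply, Complex.sq_norm, Complex.normSq_apply]

theorem sum_range_sq_singularValues_le_frobNorm_sq (M : Matrix (Fin a) (Fin b) ℂ) (k : ℕ) :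
    ∑ i ∈ range k, M.singularValues i ^ 2 ≤ frobNorm M ^ 2 := by
  rw [frobNorm, Real.sq_sqrt (by positivity), ← sum_range_sq_singularValues]
  rcases le_total k b with hkb | hbk
  · exact sum_le_sum_of_subset_of_nonneg (range_mono hkb) fun _ _ _ => sq_nonneg _
  · refine (sum_subset (range_mono hbk) fun i _ hi => ?_).ge
    rw [singularValues_of_card_le (by simpa using hi), zero_pow two_ne_zero]

theorem prod_eigenvalues_conjTranspose_mul_self_le (M : Matrix (Fin a) (Fin b) ℂ)
    (S : Finset (Fin b)) :
    ∏ j ∈ S, (isHermitian_conjTranspose_mul_self M).eigenvalues j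
      ≤ ∏ i ∈ range #S, M.singularValues i ^ 2 := by
  obtain ⟨τ, hτ⟩ := exists_equiv_eigenvalues_eq_sq_singularValues M
  let ι : Fin b ↪ ℕ := τ.toEmbedding.trans Fin.valEmbedding
  have hsq : Antitone fun i => M.singularValues i ^ 2 := fun i j hij =>
    pow_le_pow_left₀ (singularValues_nonneg M j) (singularValues_antitone M hij) 2
  calc ∏ j ∈ S, _ = ∏ i ∈ S.map ι, M.singularValues i ^ 2 := by
        rw [prod_map]
        exact prod_congr rfl fun j _ => hτ j
    _ ≤ _ := by
        simpa using prod_le_prod_range_card_of_antitone hsq (fun i => sq_nonneg _) (S.map ι)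

theorem re_det_conjTranspose_mul_diagonal_mul (X : Matrix (Fin N) (Fin k) ℂ) (w : Fin N → ℝ) :
    (Xᴴ * (diagonal (fun i => (w i : ℂ)) * X)).det.re = ∑ S : {s : Finset (Fin N) // #s = k},
      (∏ i ∈ S.1, w i) * Complex.normSq (X.submatrix (S.1.orderEmbOfFin S.2) id).det := by
  rw [det_mul_eq_sum_det_submatrix, Complex.re_sum]
  refine sum_congr rfl fun S _ => ?_
  set e := S.1.orderEmbOfFin S.2
  have hdiag : (diagonal (fun i => (w i : ℂ)) * X).submatrix e id
      = diagonal (fun i => (w (e i) : ℂ)) * X.submatrix e id := by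
    ext i j
    simp [diagonal_mul]
  rw [← conjTranspose_submatrix, det_conjTranspose, hdiag, det_mul, det_diagonal,
    ← Complex.ofReal_prod, mul_left_comm, Complex.star_def, ← Complex.normSq_eq_conj_mul_self,
    ← Complex.ofReal_mul, Complex.ofReal_re, ← S.1.map_orderEmbOfFin_univ S.2, prod_map]
  rfl

noncomputable def gramDet (X : Matrix (Fin N) (Fin k) ℂ) : ℝ :=
  (Xᴴ * X).det.re

theorem gramDet_eq_one_of_conjTranspose_mul_self_eq_one {X : Matrix (Fin N) (Fin k) ℂ}
    (hX : Xᴴ * X = 1) : gramDet X = 1 := by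
  rw [gramDet, hX, det_one, Complex.one_re]

theorem gramDet_mul_le (M : Matrix (Fin a) (Fin b) ℂ) (N : Matrix (Fin b) (Fin k) ℂ) :
    gramDet (M * N) ≤ (∏ i ∈ range k, M.singularValues i) ^ 2 * gramDet N := by
  set hH := isHermitian_conjTranspose_mul_self M
  set W : Matrix (Fin b) (Fin b) ℂ := ↑hH.eigenvectorUnitary
  set G := Wᴴ * N
  have hspec : Mᴴ * M = W * diagonal (fun j => (hH.eigenvalues j : ℂ)) * Wᴴ := by
    conv_lhs => rw [hH.spectral_theorem, Unitary.conjStarAlgAut_apply]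
    rfl
  have hWW : W * Wᴴ = 1 := Unitary.coe_mul_star_self _
  have hMN : (M * N)ᴴ * (M * N) = Gᴴ * (diagonal (fun j => (hH.eigenvalues j : ℂ)) * G) := by
    calc (M * N)ᴴ * (M * N) = Nᴴ * (Mᴴ * M) * N := by
          simp only [conjTranspose_mul, Matrix.mul_assoc]
      _ = _ := by
          rw [congrArg (fun X => Nᴴ * X * N) hspec]
          simp only [G, conjTranspose_mul, conjTranspose_conjTranspose, Matrix.mul_assoc]
  have hN : Nᴴ * N = Gᴴ * (diagonal (fun _ : Fin b => ((1 : ℝ) : ℂ)) * G) := by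
    simp only [G, conjTranspose_mul, conjTranspose_conjTranspose, Complex.ofReal_one,
      diagonal_one, Matrix.one_mul, Matrix.mul_assoc]
    rw [← Matrix.mul_assoc W Wᴴ N, hWW, Matrix.one_mul]
  -- Both Gram determinants are sums of `|det G_S|^2` over the `k`-subsets `S`, with weights
  -- `∏_{j ∈ S} λ_j` and `1` respectively.
  rw [gramDet, gramDet, hMN, hN, re_det_conjTranspose_mul_diagonal_mul,
    re_det_conjTranspose_mul_diagonal_mul, mul_sum]
  refine sum_le_sum fun S _ => ?_
  rw [prod_const_one, one_mul, ← prod_pow]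
  refine mul_le_mul_of_nonneg_right ?_ (Complex.normSq_nonneg _)
  simpa only [S.2] using prod_eigenvalues_conjTranspose_mul_self_le M S.1

/-- The witness is made of the top `k` right singular vectors of `M`. -/
theorem exists_isometry_gramDet_mul_eq (M : Matrix (Fin a) (Fin b) ℂ) (hk : k ≤ b) :
    ∃ V : Matrix (Fin b) (Fin k) ℂ, Vᴴ * V = 1 ∧
      gramDet (M * V) = (∏ i ∈ range k, M.singularValues i) ^ 2 := by
  obtain ⟨τ, hτ⟩ := exists_equiv_eigenvalues_eq_sq_singularValues M
  set hH := isHermitian_conjTranspose_mul_self M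
  set W : Matrix (Fin b) (Fin b) ℂ := ↑hH.eigenvectorUnitary
  set ι : Fin k → Fin b := τ.symm ∘ Fin.castLE hk
  have hι : Function.Injective ι := τ.symm.injective.comp (Fin.castLE_injective hk)
  have hWW : Wᴴ * W = 1 := Unitary.coe_star_mul_self _
  have hdiag : Wᴴ * (Mᴴ * M) * W = diagonal (fun j => (hH.eigenvalues j : ℂ)) := by
    have h := hH.conjStarAlgAut_star_eigenvectorUnitary
    rw [Unitary.conjStarAlgAut_star_apply] at h
    exact h
  have hcompress : ∀ X : Matrix (Fin b) (Fin b) ℂ,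
      (W.submatrix id ι)ᴴ * X * W.submatrix id ι = (Wᴴ * X * W).submatrix ι ι := by
    intro X
    rw [conjTranspose_submatrix, submatrix_mul _ _ ι id ι Function.bijective_id,
      submatrix_mul _ _ ι id id Function.bijective_id, submatrix_id_id]
  refine ⟨W.submatrix id ι, ?_, ?_⟩
  · simpa [hWW, submatrix_one _ hι] using hcompress 1
  · have hMV : (M * W.submatrix id ι)ᴴ * (M * W.submatrix id ι)
        = diagonal (fun j => (hH.eigenvalues (ι j) : ℂ)) := by
      rw [conjTranspose_mul, Matrix.mul_assoc, ← Matrix.mul_assoc Mᴴ, ← Matrix.mul_assoc,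
        hcompress, hdiag, submatrix_diagonal _ _ hι]
      rfl
    rw [gramDet, hMV, det_diagonal, ← Complex.ofReal_prod, Complex.ofReal_re, ← prod_pow,
      ← Fin.prod_univ_eq_prod_range (fun i => M.singularValues i ^ 2)]
    refine prod_congr rfl fun j _ => ?_
    simp [ι, hτ]

/-- **Horn's inequality**. -/
theorem prod_singularValues_mul_le (P : Matrix (Fin a) (Fin b) ℂ) (Q : Matrix (Fin b) (Fin c) ℂ)
    (k : ℕ) :
    ∏ i ∈ range k, (P * Q).singularValues i
      ≤ (∏ i ∈ range k, P.singularValues i) * ∏ i ∈ range k, Q.singularValues i := by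
  have hP := prod_nonneg fun i (_ : i ∈ range k) => singularValues_nonneg P i
  have hQ := prod_nonneg fun i (_ : i ∈ range k) => singularValues_nonneg Q i
  rcases le_or_gt k c with hk | hk
  · obtain ⟨V, hV, hPQV⟩ := exists_isometry_gramDet_mul_eq (P * Q) hk
    refine (pow_le_pow_iff_left₀ (prod_nonneg fun i _ => singularValues_nonneg _ i)
      (mul_nonneg hP hQ) two_ne_zero).1 ?_
    calc _ = gramDet (P * (Q * V)) := by rw [← hPQV, Matrix.mul_assoc]
      _ ≤ (∏ i ∈ range k, P.singularValues i) ^ 2 * gramDet (Q * V) := gramDet_mul_le P _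
      _ ≤ (∏ i ∈ range k, P.singularValues i) ^ 2 *
            ((∏ i ∈ range k, Q.singularValues i) ^ 2 * gramDet V) := by
          gcongr
          exact gramDet_mul_le Q V
      _ = _ := by rw [gramDet_eq_one_of_conjTranspose_mul_self_eq_one hV, mul_one, mul_pow]
  · rw [prod_eq_zero (mem_range.2 hk) (singularValues_of_card_le (Fintype.card_fin c).le)]
    exact mul_nonneg hP hQ

end Matrix

open Matrix

theorem prod_singularValues_chainProd_le (d : ℕ → ℕ)
    (A : ∀ l : ℕ, Matrix (Fin (d (l + 1))) (Fin (d l)) ℂ) {L : ℕ} (hL : 1 ≤ L) (k : ℕ) :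
    ∏ i ∈ range k, (chainProd d A L).singularValues i
      ≤ ∏ l ∈ range L, ∏ i ∈ range k, (A l).singularValues i := by
  induction L, hL using Nat.le_induction with
  | base => simp [chainProd]
  | succ L _ ih =>
    calc ∏ i ∈ range k, (A L * chainProd d A L).singularValues i
        ≤ (∏ i ∈ range k, (A L).singularValues i)
            * ∏ i ∈ range k, (chainProd d A L).singularValues i :=
          prod_singularValues_mul_le _ _ k
      _ ≤ (∏ i ∈ range k, (A L).singularValues i)
            * ∏ l ∈ range L, ∏ i ∈ range k, (A l).singularValues i := by
          gcongr
          exact prod_nonneg fun i _ => singularValues_nonneg _ i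
      _ = _ := by rw [prod_range_succ, mul_comm]

theorem schattenNorm_rpow_eq_sum (M : Matrix (Fin a) (Fin b) ℂ) {p : ℝ} (hp : p ≠ 0) :
    schattenNorm p M ^ p = ∑ i ∈ range b, M.singularValues i ^ p := by
  obtain ⟨τ, hτ⟩ := exists_equiv_eigenvalues_eq_sq_singularValues M
  rw [schattenNorm, ← Real.rpow_mul (sum_nonneg fun i _ => by positivity), one_div,
    inv_mul_cancel₀ hp, Real.rpow_one]
  simp_rw [hτ, Real.sqrt_sq (singularValues_nonneg M _)]
  rw [τ.sum_comp (fun i => M.singularValues i ^ p),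
    Fin.sum_univ_eq_sum_range (fun i => M.singularValues i ^ p)]

theorem schattenNorm_chainProd_rpow_le_prod_frobNorm_sq (d : ℕ → ℕ)
    (A : ∀ l : ℕ, Matrix (Fin (d (l + 1))) (Fin (d l)) ℂ) {L : ℕ} (hL : 1 ≤ L) :
    schattenNorm (2 / L) (chainProd d A L) ^ ((2 : ℝ) / L)
      ≤ (∏ l ∈ range L, frobNorm (A l) ^ 2) ^ (1 / (L : ℝ)) := by
  have hLpos : (0 : ℝ) < L := by exact_mod_cast hL
  have hrpow : ∀ x : ℝ, 0 ≤ x → x ^ ((2 : ℝ) / L) = (x ^ 2) ^ (1 / (L : ℝ)) := fun x hx => by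
    rw [← Real.rpow_natCast, ← Real.rpow_mul hx]
    ring_nf
  have hprefix : ∀ k ≤ d 0, ∏ i ∈ range k, (chainProd d A L).singularValues i ^ ((2 : ℝ) / L)
      ≤ ∏ i ∈ range k, ∏ l ∈ range L, (A l).singularValues i ^ ((2 : ℝ) / L) := by
    intro k _
    rw [prod_comm, Real.finsetProd_rpow _ _ fun i _ => singularValues_nonneg _ i]
    simp_rw [Real.finsetProd_rpow _ _ fun i _ => singularValues_nonneg _ i]
    rw [Real.finsetProd_rpow _ _ fun l _ => prod_nonneg fun i _ => singularValues_nonneg _ i]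
    exact Real.rpow_le_rpow (prod_nonneg fun i _ => singularValues_nonneg _ i)
      (prod_singularValues_chainProd_le d A hL k) (by positivity)
  calc schattenNorm (2 / L) (chainProd d A L) ^ ((2 : ℝ) / L)
      = ∑ i ∈ range (d 0), (chainProd d A L).singularValues i ^ ((2 : ℝ) / L) :=
        schattenNorm_rpow_eq_sum _ (by positivity)
    _ ≤ ∑ i ∈ range (d 0), ∏ l ∈ range L, (A l).singularValues i ^ ((2 : ℝ) / L) :=
        sum_range_le_of_prod_range_le
          (fun i j hij => Real.rpow_le_rpow (singularValues_nonneg _ j)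
            (singularValues_antitone _ hij) (by positivity))
          (fun i => Real.rpow_nonneg (singularValues_nonneg _ i) _)
          (fun i => prod_nonneg fun l _ => Real.rpow_nonneg (singularValues_nonneg _ i) _) hprefix
    _ = ∑ i ∈ range (d 0), ∏ l ∈ range L, ((A l).singularValues i ^ 2) ^ (1 / (L : ℝ)) := by
        simp_rw [hrpow _ (singularValues_nonneg _ _)]
    _ ≤ ∏ l ∈ range L, (∑ i ∈ range (d 0), (A l).singularValues i ^ 2) ^ (1 / (L : ℝ)) :=
        sum_prod_rpow_le_prod_sum_rpow _ _ (fun _ _ => by positivity)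
          (by simp [hLpos.ne']) fun _ _ _ _ => sq_nonneg _
    _ ≤ ∏ l ∈ range L, (frobNorm (A l) ^ 2) ^ (1 / (L : ℝ)) :=
        prod_le_prod (fun _ _ => by positivity) fun l _ => Real.rpow_le_rpow
          (sum_nonneg fun _ _ => sq_nonneg _) (sum_range_sq_singularValues_le_frobNorm_sq _ _)
          (by positivity)
    _ = _ := Real.finsetProd_rpow _ _ (fun _ _ => sq_nonneg _) _

theorem schatten_le_frobenius_factorization (m n L : ℕ) (hL : 1 ≤ L)
    (B : Matrix (Fin m) (Fin n) ℂ)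
    (d : ℕ → ℕ) (A : ∀ l : ℕ, Matrix (Fin (d (l + 1))) (Fin (d l)) ℂ)
    (hdL : d L = m) (hd0 : d 0 = n)
    (hB : chainProd d A L = B.submatrix (Fin.cast hdL) (Fin.cast hd0)) :
    (schattenNorm (2 / (L : ℝ)) B) ^ ((2 : ℝ) / (L : ℝ))
        ≤ (∏ l ∈ Finset.range L, frobNorm (A l) ^ 2) ^ (1 / (L : ℝ))
    ∧ (∏ l ∈ Finset.range L, frobNorm (A l) ^ 2) ^ (1 / (L : ℝ))
        ≤ (1 / (L : ℝ)) * ∑ l ∈ Finset.range L, frobNorm (A l) ^ 2 := by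
  subst hdL hd0
  obtain rfl : chainProd d A L = B := by simpa [Fin.cast_refl] using hB
  have hLpos : (0 : ℝ) < L := by exact_mod_cast hL
  refine ⟨schattenNorm_chainProd_rpow_le_prod_frobNorm_sq d A hL, ?_⟩
  rw [← Real.finsetProd_rpow _ _ fun _ _ => sq_nonneg _, mul_sum]
  exact Real.geom_mean_le_arith_mean_weighted _ _ _ (fun _ _ => by positivity)
    (by simp [hLpos.ne']) fun _ _ => sq_nonneg _
end

section
/- Let B ∈ M(m×n, ℂ) and let L ≥ 1 be an integer. Write a singular value decomposition B = U S V*, where r = min{m,n}, U and V have orthonormal columns, and S = diag(λ_1, …, λ_r) with λ_i ≥ 0. Then the composable sequence of L matrices A_1 = S^{1/L} V*, A_2 = ⋯ = A_{L−1} = S^{1/L}, A_L = U S^{1/L} satisfies A_L ⋯ A_1 = B and (1/L) Σ_{l=1}^{L} ‖A_l‖_2^2 = ‖S^{1/L}‖_2^2 = (‖B‖^S_{2/L})^{2/L}. In particular, there exists a composable factorization of B into L factors achieving equality in the bound (‖B‖^S_{2/L})^{2/L} ≤ (1/L) Σ_l ‖A_l‖_2^2. -/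
/-!
Every factor has the form `P * S^{1/L} * Q` with `Pᴴ P = 1` and `Q Qᴴ = 1` (`P` is `U` or an
identity, `Q` is `Vᴴ` or an identity), so its Frobenius norm is that of `S^{1/L}`, and in the
product the inner isometries cancel, leaving `U (S^{1/L})^L Vᴴ = B`. For the Schatten norm,
`Bᴴ B = V S² Vᴴ`, and Sylvester's identity `X^r χ(V S² Vᴴ) = X^n χ(Vᴴ V S²) = X^n χ(S²)` shows
that the eigenvalues of `Bᴴ B` are the `σ_k²` up to zeros, so `‖B‖^S_p ^ p = ∑ σ_k ^ p`.
-/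

open scoped BigOperators
open Matrix

section Frobenius

variable {m n : ℕ}

theorem frobNorm_nonneg (X : Matrix (Fin m) (Fin n) ℂ) : 0 ≤ frobNorm X :=
  Real.sqrt_nonneg _

theorem frobNorm_sq (X : Matrix (Fin m) (Fin n) ℂ) : frobNorm X ^ 2 = ∑ i, ∑ j, ‖X i j‖ ^ 2 :=
  Real.sq_sqrt (by positivity)

theorem ofReal_frobNorm_sq (X : Matrix (Fin m) (Fin n) ℂ) :
    ((frobNorm X ^ 2 : ℝ) : ℂ) = (Xᴴ * X).trace := by
  rw [frobNorm_sq, Finset.sum_comm]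
  simp [trace, mul_apply, Complex.conj_mul']

theorem frobNorm_mul_mul_eq {p q r s : ℕ} (P : Matrix (Fin p) (Fin r) ℂ)
    (D : Matrix (Fin r) (Fin s) ℂ) (Q : Matrix (Fin s) (Fin q) ℂ)
    (hP : Pᴴ * P = 1) (hQ : Q * Qᴴ = 1) : frobNorm (P * D * Q) = frobNorm D := by
  rw [← pow_left_inj₀ (frobNorm_nonneg _) (frobNorm_nonneg _) two_ne_zero, ← Complex.ofReal_inj,
    ofReal_frobNorm_sq, ofReal_frobNorm_sq]
  calc ((P * D * Q)ᴴ * (P * D * Q)).trace = (Qᴴ * (Dᴴ * (Pᴴ * P) * D * Q)).trace := by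
        simp only [conjTranspose_mul, Matrix.mul_assoc]
    _ = (Dᴴ * D * (Q * Qᴴ)).trace := by
        rw [hP, Matrix.mul_one, trace_mul_comm, Matrix.mul_assoc]
    _ = (Dᴴ * D).trace := by rw [hQ, Matrix.mul_one]

theorem frobNorm_diagonal_sq (v : Fin n → ℂ) : frobNorm (diagonal v) ^ 2 = ∑ k, ‖v k‖ ^ 2 := by
  rw [frobNorm_sq]
  refine Finset.sum_congr rfl fun i _ => ?_
  rw [Finset.sum_eq_single i (fun j _ hj => by simp [diagonal_apply_ne _ hj.symm]) (by simp)]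
  simp

theorem frobNorm_diagonal_rpow_sq {σ : Fin n → ℝ} (hσ : ∀ k, 0 ≤ σ k) (t : ℝ) :
    frobNorm (diagonal fun k => ((σ k ^ t : ℝ) : ℂ)) ^ 2 = ∑ k, σ k ^ (2 * t) := by
  rw [frobNorm_diagonal_sq]
  refine Finset.sum_congr rfl fun k _ => ?_
  rw [Complex.norm_real, Real.norm_of_nonneg (Real.rpow_nonneg (hσ k) t), ← Real.rpow_natCast,
    ← Real.rpow_mul (hσ k), mul_comm]
  norm_num

end Frobenius

theorem diagonal_rpow_inv_pow {r : ℕ} {σ : Fin r → ℝ} (hσ : ∀ k, 0 ≤ σ k) {N : ℕ} (hN : N ≠ 0) :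
    (diagonal fun k => ((σ k ^ (1 / (N : ℝ)) : ℝ) : ℂ)) ^ N = diagonal fun k => (σ k : ℂ) := by
  rw [diagonal_pow]
  congr with k
  rw [Pi.pow_apply, ← Complex.ofReal_pow, one_div, Real.rpow_inv_natCast_pow (hσ k) hN]

open Polynomial in
theorem Matrix.IsHermitian.eigenvalues_add_replicate_eq {n r : ℕ} {H : Matrix (Fin n) (Fin n) ℂ}
    (hH : H.IsHermitian) {V : Matrix (Fin n) (Fin r) ℂ} (hV : Vᴴ * V = 1) {μ : Fin r → ℝ}
    (hHV : H = V * diagonal (fun k => (μ k : ℂ)) * Vᴴ) :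
    Multiset.map hH.eigenvalues Finset.univ.val + Multiset.replicate r 0
      = Multiset.map μ Finset.univ.val + Multiset.replicate n 0 := by
  have hpoly := charpoly_mul_comm' (V * diagonal (fun k => (μ k : ℂ))) Vᴴ
  rw [← hHV, ← Matrix.mul_assoc, hV, Matrix.one_mul, charpoly_diagonal, hH.charpoly_eq] at hpoly
  have hroots := congrArg (fun p => p.roots.map Complex.re) hpoly
  rw [add_comm, add_comm (Multiset.map μ _)]
  simpa [roots_mul, X_ne_zero, Finset.prod_ne_zero_iff, X_sub_C_ne_zero, roots_prod,
    Function.comp_def, Multiset.nsmul_singleton] using hroots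

theorem Matrix.IsHermitian.sum_map_eigenvalues_eq {n r : ℕ} {H : Matrix (Fin n) (Fin n) ℂ}
    (hH : H.IsHermitian) {V : Matrix (Fin n) (Fin r) ℂ} (hV : Vᴴ * V = 1) {μ : Fin r → ℝ}
    (hHV : H = V * diagonal (fun k => (μ k : ℂ)) * Vᴴ) {f : ℝ → ℝ} (hf : f 0 = 0) :
    ∑ i, f (hH.eigenvalues i) = ∑ k, f (μ k) := by
  simpa [hf, Finset.sum_eq_multiset_sum, Function.comp_def] using
    congrArg (fun s => (s.map f).sum) (hH.eigenvalues_add_replicate_eq hV hHV)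

theorem schattenNorm_rpow_eq_of_svd {m n r : ℕ} {p : ℝ} (hp : p ≠ 0)
    {B : Matrix (Fin m) (Fin n) ℂ} {U : Matrix (Fin m) (Fin r) ℂ} {V : Matrix (Fin n) (Fin r) ℂ}
    {σ : Fin r → ℝ} (hσ : ∀ k, 0 ≤ σ k) (hU : Uᴴ * U = 1) (hV : Vᴴ * V = 1)
    (hB : B = U * diagonal (fun k => (σ k : ℂ)) * Vᴴ) :
    schattenNorm p B ^ p = ∑ k, σ k ^ p := by
  have hBB : Bᴴ * B = V * diagonal (fun k => ((σ k ^ 2 : ℝ) : ℂ)) * Vᴴ := by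
    calc Bᴴ * B
        = V * ((diagonal fun k => (σ k : ℂ))ᴴ * (Uᴴ * U) * diagonal fun k => (σ k : ℂ)) * Vᴴ := by
          simp only [hB, conjTranspose_mul, conjTranspose_conjTranspose, Matrix.mul_assoc]
      _ = V * diagonal (fun k => ((σ k ^ 2 : ℝ) : ℂ)) * Vᴴ := by
          rw [hU, Matrix.mul_one, diagonal_conjTranspose, diagonal_mul_diagonal]
          simp [sq]
  have hsum := (isHermitian_conjTranspose_mul_self B).sum_map_eigenvalues_eq hV hBB
    (f := fun x => √x ^ p) (by simp [Real.zero_rpow hp])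
  have hnonneg : 0 ≤ ∑ k, σ k ^ p := Finset.sum_nonneg fun k _ => Real.rpow_nonneg (hσ k) p
  simp only [Real.sqrt_sq (hσ _)] at hsum
  rw [schattenNorm, hsum, ← Real.rpow_mul hnonneg, one_div_mul_cancel hp, Real.rpow_one]

theorem chainProd_succ_eq_of_factors {r : ℕ} (d : ℕ → ℕ)
    (A : ∀ l : ℕ, Matrix (Fin (d (l + 1))) (Fin (d l)) ℂ)
    (P : ∀ l : ℕ, Matrix (Fin (d (l + 1))) (Fin r) ℂ) (D : Matrix (Fin r) (Fin r) ℂ)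
    (Q : ∀ l : ℕ, Matrix (Fin r) (Fin (d l)) ℂ) (N : ℕ) (hA : ∀ l ≤ N, A l = P l * D * Q l)
    (hQP : ∀ l < N, Q (l + 1) * P l = 1) :
    chainProd d A (N + 1) = P N * D ^ (N + 1) * Q 0 := by
  induction N with
  | zero => simp [chainProd, hA 0 le_rfl]
  | succ N ih =>
    calc chainProd d A (N + 2) = P (N + 1) * D * (Q (N + 1) * P N) * D ^ (N + 1) * Q 0 := by
          rw [chainProd, ih (fun l hl => hA l (by omega)) (fun l hl => hQP l (by omega)),
            hA (N + 1) le_rfl]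
          simp only [Matrix.mul_assoc]
      _ = P (N + 1) * D ^ (N + 2) * Q 0 := by
          rw [hQP N (by omega), Matrix.mul_one, Matrix.mul_assoc (P (N + 1)), ← pow_succ']

section CastRows

variable {α : Type*} {m r : ℕ}

/-- The rows of `M` renumbered by `Fin s` (zero beyond row `m`): for `s = m` this is
`M.submatrix (Fin.cast h) id`, written without a proof `h : s = m`. -/
def castRows [Zero α] (s : ℕ) (M : Matrix (Fin m) (Fin r) α) : Matrix (Fin s) (Fin r) α :=
  of fun i k => if h : (i : ℕ) < m then M ⟨i, h⟩ k else 0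

@[simp]
theorem castRows_self [Zero α] (M : Matrix (Fin m) (Fin r) α) : castRows m M = M := by
  ext i k
  simp [castRows]

theorem castRows_one_apply [Zero α] [One α] {s : ℕ} (i : Fin s) (k : Fin r) :
    castRows s (1 : Matrix (Fin r) (Fin r) α) i k = if (i : ℕ) = k then 1 else 0 := by
  by_cases h : (i : ℕ) < r
  · simp [castRows, h, one_apply, Fin.ext_iff]
  · simp [castRows, h, show (i : ℕ) ≠ k by omega]

theorem conjTranspose_castRows_mul_castRows [Semiring α] [StarRing α] {s : ℕ} (h : s = m)
    (M N : Matrix (Fin m) (Fin r) α) : (castRows s M)ᴴ * castRows s N = Mᴴ * N := by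
  subst h
  simp

theorem castRows_mul_mul_conjTranspose_castRows [Semiring α] [StarRing α] {s t n q : ℕ}
    (hs : s = m) (ht : t = n) (M : Matrix (Fin m) (Fin r) α) (X : Matrix (Fin r) (Fin q) α)
    (N : Matrix (Fin n) (Fin q) α) :
    castRows s M * X * (castRows t N)ᴴ = (M * X * Nᴴ).submatrix (Fin.cast hs) (Fin.cast ht) := by
  subst hs ht
  simp

end CastRows

section SvdFactors

variable {m n r : ℕ} (L : ℕ) (d : ℕ → ℕ)

-- The `l`-th factor of the sequence is `svdLeftFactor L d U l * S^{1/L} * svdRightFactor d V l`.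
def svdLeftFactor (U : Matrix (Fin m) (Fin r) ℂ) (l : ℕ) : Matrix (Fin (d (l + 1))) (Fin r) ℂ :=
  if L ≤ l + 1 then castRows _ U else castRows _ (1 : Matrix (Fin r) (Fin r) ℂ)

def svdRightFactor (V : Matrix (Fin n) (Fin r) ℂ) (l : ℕ) : Matrix (Fin r) (Fin (d l)) ℂ :=
  if l = 0 then (castRows _ V)ᴴ else (castRows _ (1 : Matrix (Fin r) (Fin r) ℂ))ᴴ

theorem svdLeftFactor_apply (U : Matrix (Fin m) (Fin r) ℂ) (l : ℕ) (i : Fin (d (l + 1)))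
    (k : Fin r) : svdLeftFactor L d U l i k = if L ≤ l + 1
      then (if h : (i : ℕ) < m then U ⟨i, h⟩ k else 0) else if (i : ℕ) = k then 1 else 0 := by
  rw [svdLeftFactor, apply_ite (fun M : Matrix _ _ ℂ => M i k), castRows_one_apply]
  rfl

theorem svdRightFactor_apply (V : Matrix (Fin n) (Fin r) ℂ) (l : ℕ) (k : Fin r) (j : Fin (d l)) :
    svdRightFactor d V l k j = if l = 0
      then (if h : (j : ℕ) < n then star (V ⟨j, h⟩ k) else 0)
      else if (k : ℕ) = j then 1 else 0 := by
  rw [svdRightFactor, apply_ite (fun M : Matrix _ _ ℂ => M k j), conjTranspose_apply,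
    conjTranspose_apply, castRows_one_apply]
  simp [castRows, apply_dite star, eq_comm]

variable {L d}

theorem conjTranspose_svdLeftFactor_mul_self
    (hd : ∀ k, d k = if k = 0 then n else if L ≤ k then m else r)
    {U : Matrix (Fin m) (Fin r) ℂ} (hU : Uᴴ * U = 1) (l : ℕ) :
    (svdLeftFactor L d U l)ᴴ * svdLeftFactor L d U l = 1 := by
  by_cases hl : L ≤ l + 1
  · rw [svdLeftFactor, if_pos hl, conjTranspose_castRows_mul_castRows (by simp [hd, hl]), hU]
  · rw [svdLeftFactor, if_neg hl, conjTranspose_castRows_mul_castRows (by simp [hd, hl]),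
      conjTranspose_one, Matrix.one_mul]

theorem svdRightFactor_mul_conjTranspose_self
    (hd : ∀ k, d k = if k = 0 then n else if L ≤ k then m else r)
    {V : Matrix (Fin n) (Fin r) ℂ} (hV : Vᴴ * V = 1) {l : ℕ} (hl : l < L) :
    svdRightFactor d V l * (svdRightFactor d V l)ᴴ = 1 := by
  by_cases hl0 : l = 0
  · rw [svdRightFactor, if_pos hl0, conjTranspose_conjTranspose,
      conjTranspose_castRows_mul_castRows (by simp [hd, hl0]), hV]
  · rw [svdRightFactor, if_neg hl0, conjTranspose_conjTranspose,
      conjTranspose_castRows_mul_castRows (by simp [hd, hl0, hl.not_ge]), conjTranspose_one,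
      Matrix.one_mul]

theorem svdRightFactor_succ_mul_svdLeftFactor
    (hd : ∀ k, d k = if k = 0 then n else if L ≤ k then m else r)
    (U : Matrix (Fin m) (Fin r) ℂ) (V : Matrix (Fin n) (Fin r) ℂ) {l : ℕ} (hl : l + 1 < L) :
    svdRightFactor d V (l + 1) * svdLeftFactor L d U l = 1 := by
  rw [svdRightFactor, svdLeftFactor, if_neg l.succ_ne_zero, if_neg (by omega),
    conjTranspose_castRows_mul_castRows (by simp [hd, hl.not_ge]), conjTranspose_one,
    Matrix.one_mul]

end SvdFactors

theorem svd_factorization_achieves_schatten_bound_general (m n r L : ℕ) (hL : 1 ≤ L)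
    (B : Matrix (Fin m) (Fin n) ℂ)
    (U : Matrix (Fin m) (Fin r) ℂ) (V : Matrix (Fin n) (Fin r) ℂ) (σ : Fin r → ℝ)
    (hσ : ∀ i, 0 ≤ σ i) (hU : Uᴴ * U = 1) (hV : Vᴴ * V = 1)
    (hB : B = U * Matrix.diagonal (fun i => (σ i : ℂ)) * Vᴴ)
    (d : ℕ → ℕ) (hd : ∀ k, d k = if k = 0 then n else if L ≤ k then m else r)
    (hd0 : d 0 = n) (hdL : d L = m)
    (A : ∀ l : ℕ, Matrix (Fin (d (l + 1))) (Fin (d l)) ℂ)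
    (hA : ∀ l, l < L → ∀ i j, A l i j =
      ∑ k : Fin r,
        (if L ≤ l + 1 then (if h : (i : ℕ) < m then U ⟨(i : ℕ), h⟩ k else 0)
          else (if (i : ℕ) = (k : ℕ) then 1 else 0))
        * ((σ k ^ (1 / (L : ℝ)) : ℝ) : ℂ)
        * (if l = 0 then (if h : (j : ℕ) < n then star (V ⟨(j : ℕ), h⟩ k) else 0)
          else (if (k : ℕ) = (j : ℕ) then 1 else 0))) :
    chainProd d A L = B.submatrix (Fin.cast hdL) (Fin.cast hd0)
    ∧ (1 / (L : ℝ)) * ∑ l ∈ Finset.range L, frobNorm (A l) ^ 2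
        = frobNorm (Matrix.diagonal (fun k : Fin r => ((σ k ^ (1 / (L : ℝ)) : ℝ) : ℂ))) ^ 2
    ∧ frobNorm (Matrix.diagonal (fun k : Fin r => ((σ k ^ (1 / (L : ℝ)) : ℝ) : ℂ))) ^ 2
        = (schattenNorm (2 / (L : ℝ)) B) ^ ((2 : ℝ) / (L : ℝ))
    ∧ ∃ (d' : ℕ → ℕ) (A' : ∀ l : ℕ, Matrix (Fin (d' (l + 1))) (Fin (d' l)) ℂ)
        (hdL' : d' L = m) (hd0' : d' 0 = n),
        chainProd d' A' L = B.submatrix (Fin.cast hdL') (Fin.cast hd0') ∧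
        (1 / (L : ℝ)) * ∑ l ∈ Finset.range L, frobNorm (A' l) ^ 2
          = (schattenNorm (2 / (L : ℝ)) B) ^ ((2 : ℝ) / (L : ℝ)) := by
  obtain ⟨N, rfl⟩ : ∃ N, L = N + 1 := ⟨L - 1, by omega⟩
  set D := diagonal fun k : Fin r => ((σ k ^ (1 / ((N + 1 : ℕ) : ℝ)) : ℝ) : ℂ)
  have hfactor : ∀ l ≤ N, A l = svdLeftFactor (N + 1) d U l * D * svdRightFactor d V l := by
    intro l hl
    ext i j
    rw [hA l (by omega), mul_apply]
    exact Finset.sum_congr rfl fun k _ => by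
      rw [mul_diagonal, svdLeftFactor_apply, svdRightFactor_apply]
  have hprod : chainProd d A (N + 1) = B.submatrix (Fin.cast hdL) (Fin.cast hd0) := by
    rw [chainProd_succ_eq_of_factors d A _ D _ N hfactor
        (fun l hl => svdRightFactor_succ_mul_svdLeftFactor hd U V (by omega)),
      diagonal_rpow_inv_pow hσ N.succ_ne_zero, svdLeftFactor, if_pos le_rfl, svdRightFactor,
      if_pos rfl, castRows_mul_mul_conjTranspose_castRows hdL hd0, hB]
  have hmean : 1 / ((N + 1 : ℕ) : ℝ) * ∑ l ∈ Finset.range (N + 1), frobNorm (A l) ^ 2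
      = frobNorm D ^ 2 := by
    rw [Finset.sum_congr rfl fun l hl => by
      rw [hfactor l (Nat.lt_succ_iff.mp (Finset.mem_range.mp hl)), frobNorm_mul_mul_eq _ _ _
        (conjTranspose_svdLeftFactor_mul_self hd hU l)
        (svdRightFactor_mul_conjTranspose_self hd hV (Finset.mem_range.mp hl))]]
    rw [Finset.sum_const, Finset.card_range, nsmul_eq_mul]
    field_simp
  have hschatten : frobNorm D ^ 2
      = schattenNorm (2 / ((N + 1 : ℕ) : ℝ)) B ^ ((2 : ℝ) / ((N + 1 : ℕ) : ℝ)) := by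
    rw [frobNorm_diagonal_rpow_sq hσ, schattenNorm_rpow_eq_of_svd (by positivity) hσ hU hV hB,
      mul_one_div]
  exact ⟨hprod, hmean, hschatten, d, A, hdL, hd0, hprod, hmean.trans hschatten⟩

/-- The hypotheses `hd`, `hA` describe (entrywise, uniformly in `L ≥ 1`) the composable
sequence whose first factor is `S^{1/L} Vᴴ`, whose middle factors are `S^{1/L}`, and whose
last factor is `U S^{1/L}` (for `L = 1` the single factor is `U S^{1/L} Vᴴ = B`). -/
theorem svd_factorization_achieves_schatten_bound (m n r L : ℕ) (hL : 1 ≤ L)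
    (hrmin : r = min m n)
    (B : Matrix (Fin m) (Fin n) ℂ)
    (U : Matrix (Fin m) (Fin r) ℂ) (V : Matrix (Fin n) (Fin r) ℂ) (σ : Fin r → ℝ)
    (hσ : ∀ i, 0 ≤ σ i) (hU : Uᴴ * U = 1) (hV : Vᴴ * V = 1)
    (hB : B = U * Matrix.diagonal (fun i => (σ i : ℂ)) * Vᴴ)
    (d : ℕ → ℕ) (hd : ∀ k, d k = if k = 0 then n else if L ≤ k then m else r)
    (hd0 : d 0 = n) (hdL : d L = m)
    (A : ∀ l : ℕ, Matrix (Fin (d (l + 1))) (Fin (d l)) ℂ)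
    (hA : ∀ l, l < L → ∀ i j, A l i j =
      ∑ k : Fin r,
        (if L ≤ l + 1 then (if h : (i : ℕ) < m then U ⟨(i : ℕ), h⟩ k else 0)
          else (if (i : ℕ) = (k : ℕ) then 1 else 0))
        * ((σ k ^ (1 / (L : ℝ)) : ℝ) : ℂ)
        * (if l = 0 then (if h : (j : ℕ) < n then star (V ⟨(j : ℕ), h⟩ k) else 0)
          else (if (k : ℕ) = (j : ℕ) then 1 else 0))) :
    chainProd d A L = B.submatrix (Fin.cast hdL) (Fin.cast hd0)
    ∧ (1 / (L : ℝ)) * ∑ l ∈ Finset.range L, frobNorm (A l) ^ 2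
        = frobNorm (Matrix.diagonal (fun k : Fin r => ((σ k ^ (1 / (L : ℝ)) : ℝ) : ℂ))) ^ 2
    ∧ frobNorm (Matrix.diagonal (fun k : Fin r => ((σ k ^ (1 / (L : ℝ)) : ℝ) : ℂ))) ^ 2
        = (schattenNorm (2 / (L : ℝ)) B) ^ ((2 : ℝ) / (L : ℝ))
    ∧ ∃ (d' : ℕ → ℕ) (A' : ∀ l : ℕ, Matrix (Fin (d' (l + 1))) (Fin (d' l)) ℂ)
        (hdL' : d' L = m) (hd0' : d' 0 = n),
        chainProd d' A' L = B.submatrix (Fin.cast hdL') (Fin.cast hd0') ∧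
        (1 / (L : ℝ)) * ∑ l ∈ Finset.range L, frobNorm (A' l) ^ 2
          = (schattenNorm (2 / (L : ℝ)) B) ^ ((2 : ℝ) / (L : ℝ)) :=
  svd_factorization_achieves_schatten_bound_general m n r L hL B U V σ hσ hU hV hB d hd hd0 hdL A hA
end

section
/- Let Φ : ℝ^n → ℝ_{≥0} be a symmetric gauge function, i.e. a norm on ℝ^n that is invariant under coordinate permutations and under sign changes of coordinates. Let p_1, p_2, r > 0 satisfy 1/p_1 + 1/p_2 = 1/r. Then for all x, y ∈ ℝ^n, Φ(|x·y|^r)^{1/r} ≤ Φ(|x|^{p_1})^{1/p_1} · Φ(|y|^{p_2})^{1/p_2}, where x·y denotes the coordinatewise product, |z| denotes the coordinatewise absolute value, and z^t denotes the coordinatewise t-th power of a vector z with nonnegative coordinates. -/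
/-!
Since `Φ` is a convex function invariant under sign changes, shrinking one coordinate in absolute
value writes the vector as a convex combination of itself and its reflection, so `Φ` is monotone
in the absolute values of the coordinates. With `a = |x|^{p₁}`, `b = |y|^{p₂}` and
`θᵢ = r / pᵢ`, we have `|x·y|^r = a^{θ₁} b^{θ₂}`; after normalising `Φ a = Φ b = 1`, the weighted
AM-GM inequality bounds `a^{θ₁} b^{θ₂}` coordinatewise by `θ₁ a + θ₂ b`, whose gauge is at most
`θ₁ + θ₂ = 1`.
-/

namespace Seminorm

variable {ι : Type*} (p : Seminorm ℝ (ι → ℝ))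

theorem apply_update_le_of_abs_le [DecidableEq ι]
    (hsign : ∀ ε : ι → ℝ, (∀ i, ε i = 1 ∨ ε i = -1) → ∀ x, p (fun i => ε i * x i) = p x)
    (v : ι → ℝ) (i : ι) {s : ℝ} (hs : |s| ≤ |v i|) : p (Function.update v i s) ≤ p v := by
  set t := s / v i
  have ht : |t| ≤ 1 := by
    rw [abs_div]
    exact div_le_one_of_le₀ hs (abs_nonneg _)
  set ε : ι → ℝ := Function.update 1 i (-1)
  have hε : ∀ j, ε j = 1 ∨ ε j = -1 := fun j => by
    by_cases hj : j = i <;> simp [ε, hj]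
  have hst : t * v i = s := by
    rcases eq_or_ne (v i) 0 with hv | hv
    · rw [hv, abs_zero] at hs
      rw [hv, mul_zero, abs_nonpos_iff.mp hs]
    · exact div_mul_cancel₀ s hv
  have hcomb : Function.update v i s
      = ((1 + t) / 2) • v + ((1 - t) / 2) • (fun j => ε j * v j) := by
    funext j
    by_cases hj : j = i
    · subst hj
      simp only [Function.update_self, Pi.add_apply, Pi.smul_apply, smul_eq_mul, ε]
      linear_combination -hst
    · simp only [Function.update_of_ne hj, Pi.add_apply, Pi.smul_apply, smul_eq_mul, ε,
        Pi.one_apply]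
      ring
  have h₁ : 0 ≤ (1 + t) / 2 := by linarith [neg_abs_le t]
  have h₂ : 0 ≤ (1 - t) / 2 := by linarith [le_abs_self t]
  calc p (Function.update v i s)
      ≤ p (((1 + t) / 2) • v) + p (((1 - t) / 2) • (fun j => ε j * v j)) := by
        rw [hcomb]; exact map_add_le_add p _ _
    _ = p v := by
        rw [map_smul_eq_mul, map_smul_eq_mul, hsign ε hε v, Real.norm_of_nonneg h₁,
          Real.norm_of_nonneg h₂]
        ring

theorem apply_le_apply_of_abs_le [Fintype ι]
    (hsign : ∀ ε : ι → ℝ, (∀ i, ε i = 1 ∨ ε i = -1) → ∀ x, p (fun i => ε i * x i) = p x)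
    {u v : ι → ℝ} (h : ∀ i, |u i| ≤ |v i|) : p u ≤ p v := by
  classical
  suffices ∀ s : Finset ι, p (s.piecewise u v) ≤ p v by
    simpa only [Finset.piecewise_univ] using this Finset.univ
  intro s
  induction s using Finset.induction_on with
  | empty => rw [Finset.piecewise_empty]
  | insert a s ha ih =>
    rw [Finset.piecewise_insert]
    refine (p.apply_update_le_of_abs_le hsign _ a ?_).trans ih
    rw [Finset.piecewise_eq_of_notMem _ _ _ ha]
    exact h a

theorem apply_rpow_mul_rpow_le
    (hmono : ∀ u v : ι → ℝ, (∀ i, |u i| ≤ |v i|) → p u ≤ p v)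
    (hdef : ∀ a, p a = 0 → a = 0)
    {θ₁ θ₂ : ℝ} (hθ₁ : 0 < θ₁) (hθ₂ : 0 < θ₂) (hθ : θ₁ + θ₂ = 1)
    {a b : ι → ℝ} (ha : 0 ≤ a) (hb : 0 ≤ b) :
    p (fun i => a i ^ θ₁ * b i ^ θ₂) ≤ p a ^ θ₁ * p b ^ θ₂ := by
  rcases (apply_nonneg p a).eq_or_lt with hA | hA
  · have h0 : (fun i => a i ^ θ₁ * b i ^ θ₂) = 0 := by
      funext i; simp [hdef a hA.symm, Real.zero_rpow hθ₁.ne']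
    rw [h0, map_zero]; positivity
  rcases (apply_nonneg p b).eq_or_lt with hB | hB
  · have h0 : (fun i => a i ^ θ₁ * b i ^ θ₂) = 0 := by
      funext i; simp [hdef b hB.symm, Real.zero_rpow hθ₂.ne']
    rw [h0, map_zero]; positivity
  set A := p a
  set B := p b
  set C := A ^ θ₁ * B ^ θ₂
  have hC : 0 < C := by positivity
  have hpoint : ∀ i, a i ^ θ₁ * b i ^ θ₂ ≤ C * (θ₁ / A * a i + θ₂ / B * b i) := fun i => by
    have hamgm := Real.geom_mean_le_arith_mean2_weighted hθ₁.le hθ₂.le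
      (div_nonneg (ha i) hA.le) (div_nonneg (hb i) hB.le) hθ
    rw [Real.div_rpow (ha i) hA.le, Real.div_rpow (hb i) hB.le] at hamgm
    calc a i ^ θ₁ * b i ^ θ₂ = C * (a i ^ θ₁ / A ^ θ₁ * (b i ^ θ₂ / B ^ θ₂)) := by
          rw [div_mul_div_comm, mul_div_cancel₀ _ hC.ne']
      _ ≤ C * (θ₁ / A * a i + θ₂ / B * b i) := by
          gcongr
          exact hamgm.trans_eq (by ring)
  calc p (fun i => a i ^ θ₁ * b i ^ θ₂)
      ≤ p (C • ((θ₁ / A) • a + (θ₂ / B) • b)) := by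
        refine hmono _ _ fun i => ?_
        have h0 : 0 ≤ a i ^ θ₁ * b i ^ θ₂ :=
          mul_nonneg (Real.rpow_nonneg (ha i) _) (Real.rpow_nonneg (hb i) _)
        simp only [Pi.smul_apply, Pi.add_apply, smul_eq_mul]
        rw [abs_of_nonneg h0, abs_of_nonneg (h0.trans (hpoint i))]
        exact hpoint i
    _ ≤ C * (θ₁ / A * A + θ₂ / B * B) := by
        rw [map_smul_eq_mul, Real.norm_of_nonneg hC.le]
        gcongr
        refine (map_add_le_add p _ _).trans_eq ?_
        rw [map_smul_eq_mul, map_smul_eq_mul, Real.norm_of_nonneg (by positivity),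
          Real.norm_of_nonneg (by positivity)]
    _ = C := by rw [div_mul_cancel₀ _ hA.ne', div_mul_cancel₀ _ hB.ne', hθ, mul_one]

end Seminorm

theorem symmetric_gauge_holder_general (n : ℕ) (Φ : (Fin n → ℝ) → ℝ)
    -- Φ is a norm on ℝ^n …
    (hzero : ∀ x, Φ x = 0 ↔ x = 0)
    (hsmul : ∀ (c : ℝ) x, Φ (c • x) = |c| * Φ x)
    (htriangle : ∀ x y, Φ (x + y) ≤ Φ x + Φ y)
    -- … invariant under coordinate permutations and sign changes (symmetric gauge function)
    (hsign : ∀ ε : Fin n → ℝ, (∀ i, ε i = 1 ∨ ε i = -1) → ∀ x,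
      Φ (fun i => ε i * x i) = Φ x)
    (p₁ p₂ r : ℝ) (hp₁ : 0 < p₁) (hp₂ : 0 < p₂) (hr : 0 < r)
    (hpr : 1 / p₁ + 1 / p₂ = 1 / r)
    (x y : Fin n → ℝ) :
    Φ (fun i => |x i * y i| ^ r) ^ (1 / r)
      ≤ Φ (fun i => |x i| ^ p₁) ^ (1 / p₁) * Φ (fun i => |y i| ^ p₂) ^ (1 / p₂) := by
  let p : Seminorm ℝ (Fin n → ℝ) := Seminorm.of Φ htriangle fun c x => by
    rw [Real.norm_eq_abs]; exact hsmul c x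
  set a : Fin n → ℝ := fun i => |x i| ^ p₁
  set b : Fin n → ℝ := fun i => |y i| ^ p₂
  have hθ : r / p₁ + r / p₂ = 1 := by
    field_simp at hpr ⊢
    linarith
  have hab : (fun i => |x i * y i| ^ r) = fun i => a i ^ (r / p₁) * b i ^ (r / p₂) := by
    funext i
    rw [abs_mul, Real.mul_rpow (abs_nonneg _) (abs_nonneg _), ← Real.rpow_mul (abs_nonneg _),
      ← Real.rpow_mul (abs_nonneg _), mul_div_cancel₀ _ hp₁.ne', mul_div_cancel₀ _ hp₂.ne']
  have hkey : Φ (fun i => |x i * y i| ^ r) ≤ Φ a ^ (r / p₁) * Φ b ^ (r / p₂) := by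
    rw [hab]
    exact p.apply_rpow_mul_rpow_le (fun _ _ => p.apply_le_apply_of_abs_le hsign)
      (fun a => (hzero a).mp) (div_pos hr hp₁) (div_pos hr hp₂) hθ
      (fun _ => Real.rpow_nonneg (abs_nonneg _) _) (fun _ => Real.rpow_nonneg (abs_nonneg _) _)
  have hA : 0 ≤ Φ a := apply_nonneg p a
  have hB : 0 ≤ Φ b := apply_nonneg p b
  calc Φ (fun i => |x i * y i| ^ r) ^ (1 / r)
      ≤ (Φ a ^ (r / p₁) * Φ b ^ (r / p₂)) ^ (1 / r) :=
        Real.rpow_le_rpow (apply_nonneg p _) hkey (by positivity)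
    _ = Φ a ^ (1 / p₁) * Φ b ^ (1 / p₂) := by
        rw [Real.mul_rpow (by positivity) (by positivity), ← Real.rpow_mul hA,
          ← Real.rpow_mul hB]
        congr 2 <;> field_simp

theorem symmetric_gauge_holder (n : ℕ) (Φ : (Fin n → ℝ) → ℝ)
    -- Φ is a norm on ℝ^n …
    (hzero : ∀ x, Φ x = 0 ↔ x = 0)
    (hsmul : ∀ (c : ℝ) x, Φ (c • x) = |c| * Φ x)
    (htriangle : ∀ x y, Φ (x + y) ≤ Φ x + Φ y)
    -- … invariant under coordinate permutations and sign changes (symmetric gauge function)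
    (hperm : ∀ (σ : Equiv.Perm (Fin n)) x, Φ (x ∘ σ) = Φ x)
    (hsign : ∀ ε : Fin n → ℝ, (∀ i, ε i = 1 ∨ ε i = -1) → ∀ x,
      Φ (fun i => ε i * x i) = Φ x)
    (p₁ p₂ r : ℝ) (hp₁ : 0 < p₁) (hp₂ : 0 < p₂) (hr : 0 < r)
    (hpr : 1 / p₁ + 1 / p₂ = 1 / r)
    (x y : Fin n → ℝ) :
    Φ (fun i => |x i * y i| ^ r) ^ (1 / r)
      ≤ Φ (fun i => |x i| ^ p₁) ^ (1 / p₁) * Φ (fun i => |y i| ^ p₂) ^ (1 / p₂) :=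
  symmetric_gauge_holder_general n Φ hzero hsmul htriangle hsign p₁ p₂ r hp₁ hp₂ hr hpr x y
end

section
/- Fix n ∈ ℕ and let N be a unitarily invariant norm on M(n×n, ℂ), i.e. N(UAV) = N(A) for all A and all unitary U, V ∈ U(n). Define Φ : ℝ^n → ℝ_{≥0} by Φ(x) = N(diag(x)). Then: (i) Φ is a symmetric gauge function, i.e. a norm on ℝ^n invariant under coordinate permutations and sign changes of coordinates; and (ii) for every A ∈ M(n×n, ℂ), N(A) = Φ(s(A)), where s(A) ∈ ℝ^n is the vector of singular values of A (the nonnegative square roots of the eigenvalues of AᴴA, listed with multiplicity). Consequently N is determined by a symmetric gauge function evaluated on singular values. -/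
/-!
Unitary invariance makes `N` constant on every orbit `A ↦ U * A * V`. Permutation matrices and
diagonal sign matrices are unitary, so `Φ` is invariant under permuting and flipping signs of
coordinates, and the norm axioms pass to `Φ` because `x ↦ diag x` is injective and `ℝ`-linear.
For the second part, the singular value decomposition `A = U * diag (s A) * V` gives
`N A = Φ (s A)`. It is built from the unitary `W` diagonalising `Aᴴ * A`: the columns of `A * W`
are orthogonal with lengths `s A`, and normalising the nonzero ones and extending them to an
orthonormal basis yields the columns of `U`.
-/

open scoped BigOperators
open Matrix

/-- The vector of singular values of a square complex matrix: the nonnegative square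
roots of the eigenvalues of `AᴴA`, listed with multiplicity. -/
noncomputable def singVals {n : ℕ} (A : Matrix (Fin n) (Fin n) ℂ) : Fin n → ℝ :=
  fun i => Real.sqrt ((Matrix.isHermitian_conjTranspose_mul_self A).eigenvalues i)

namespace Matrix

variable {n : Type*} [Fintype n]

section Unitary

variable {R : Type*} [DecidableEq n]

theorem permMatrix_mem_unitaryGroup [CommRing R] [StarRing R] (σ : Equiv.Perm n) :
    σ.permMatrix R ∈ unitaryGroup n R := by
  rw [mem_unitaryGroup_iff', star_eq_conjTranspose, conjTranspose_permMatrix, ← permMatrix_mul,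
    mul_inv_cancel, permMatrix_one]

theorem diagonal_mem_unitaryGroup [CommRing R] [StarRing R] {d : n → R}
    (hd : ∀ i, star (d i) * d i = 1) : diagonal d ∈ unitaryGroup n R := by
  rw [mem_unitaryGroup_iff', star_eq_conjTranspose, diagonal_conjTranspose, diagonal_mul_diagonal,
    ← diagonal_one]
  exact congrArg diagonal (funext hd)

theorem permMatrix_mul_diagonal_mul_permMatrix_inv [NonAssocSemiring R] (σ : Equiv.Perm n)
    (d : n → R) : σ.permMatrix R * diagonal d * σ⁻¹.permMatrix R = diagonal (d ∘ σ) := by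
  rw [PEquiv.toMatrix_toPEquiv_mul, PEquiv.mul_toMatrix_toPEquiv]
  simp [Equiv.Perm.inv_def]

end Unitary

section SingularValueDecomposition

variable {𝕜 : Type*} [RCLike 𝕜]

open WithLp in
theorem inner_toLp_col (B : Matrix n n 𝕜) (j k : n) :
    inner 𝕜 (toLp 2 (B.col j)) (toLp 2 (B.col k)) = (Bᴴ * B) j k := by
  simp [EuclideanSpace.inner_toLp_toLp, mul_apply, dotProduct, mul_comm]

variable [DecidableEq n]

theorem exists_mem_unitaryGroup_eq_mul_diagonal (B : Matrix n n 𝕜) (s : n → ℝ)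
    (h : Bᴴ * B = diagonal fun j => ((s j ^ 2 : ℝ) : 𝕜)) :
    ∃ U ∈ unitaryGroup n 𝕜, B = U * diagonal fun j => (s j : 𝕜) := by
  set b : n → EuclideanSpace 𝕜 n := fun j => WithLp.toLp 2 (B.col j)
  have hb : ∀ j k, inner 𝕜 (b j) (b k) = if j = k then ((s j ^ 2 : ℝ) : 𝕜) else 0 := by
    intro j k
    rw [inner_toLp_col, h, diagonal_apply]
  have hon : Orthonormal 𝕜 ({j | s j ≠ 0}.domRestrict fun j => ((s j)⁻¹ : 𝕜) • b j) := by
    rw [orthonormal_iff_ite]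
    rintro ⟨j, hj⟩ ⟨k, hk⟩
    simp only [Set.domRestrict_apply, Subtype.mk.injEq, inner_smul_left, inner_smul_right, hb]
    split_ifs with hjk
    · subst hjk
      have hsj : (s j : 𝕜) ≠ 0 := by exact_mod_cast hj
      simp only [map_inv₀, RCLike.conj_ofReal, map_pow]
      field_simp
    · simp
  obtain ⟨u, hu⟩ := hon.exists_orthonormalBasis_extension_of_card_eq (by simp)
  have hbu : ∀ j, b j = (s j : 𝕜) • u j := by
    intro j
    by_cases hj : s j = 0
    · rw [hj, RCLike.ofReal_zero, zero_smul, ← inner_self_eq_zero (𝕜 := 𝕜), hb, if_pos rfl, hj]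
      simp
    · have hsj : (s j : 𝕜) ≠ 0 := by exact_mod_cast hj
      rw [hu j hj, smul_smul, mul_inv_cancel₀ hsj, one_smul]
  refine ⟨(EuclideanSpace.basisFun n 𝕜).toBasis.toMatrix u.toBasis,
    (EuclideanSpace.basisFun n 𝕜).toMatrix_orthonormalBasis_mem_unitary u, ?_⟩
  ext i j
  rw [mul_diagonal, mul_comm]
  exact congrArg (fun w => w i) (hbu j)

theorem IsHermitian.star_eigenvectorUnitary_mul_mul_eigenvectorUnitary {A : Matrix n n 𝕜}
    (hA : A.IsHermitian) :
    star (hA.eigenvectorUnitary : Matrix n n 𝕜) * A * hA.eigenvectorUnitary =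
      diagonal fun i => (hA.eigenvalues i : 𝕜) := by
  simpa [Function.comp_def] using hA.conjStarAlgAut_star_eigenvectorUnitary

end SingularValueDecomposition

end Matrix

open scoped ComplexOrder in
theorem exists_mem_unitaryGroup_eq_mul_diagonal_singVals_mul {n : ℕ}
    (A : Matrix (Fin n) (Fin n) ℂ) :
    ∃ U ∈ unitaryGroup (Fin n) ℂ, ∃ V ∈ unitaryGroup (Fin n) ℂ,
      A = U * diagonal (fun i => (singVals A i : ℂ)) * V := by
  set hH := isHermitian_conjTranspose_mul_self A
  set W : Matrix (Fin n) (Fin n) ℂ := ↑hH.eigenvectorUnitary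
  have hW : W ∈ unitaryGroup (Fin n) ℂ := hH.eigenvectorUnitary.2
  have hsq : ∀ i, singVals A i ^ 2 = hH.eigenvalues i := fun i =>
    Real.sq_sqrt ((posSemidef_conjTranspose_mul_self A).eigenvalues_nonneg i)
  have hAW : (A * W)ᴴ * (A * W) = diagonal fun i => ((singVals A i ^ 2 : ℝ) : ℂ) := by
    rw [conjTranspose_mul, ← star_eq_conjTranspose, mul_assoc, ← mul_assoc Aᴴ,
      ← mul_assoc, hH.star_eigenvectorUnitary_mul_mul_eigenvectorUnitary]
    simp only [hsq]
    rfl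
  obtain ⟨U, hU, hUD⟩ := exists_mem_unitaryGroup_eq_mul_diagonal (A * W) (singVals A) hAW
  refine ⟨U, hU, star W, Unitary.star_mem hW, ?_⟩
  calc A = A * W * star W := by rw [mul_assoc, Unitary.mul_star_self_of_mem hW, mul_one]
    _ = _ := congrArg (· * star W) hUD

theorem unitarily_invariant_norm_eq_gauge_of_singular_values (n : ℕ)
    (N : Matrix (Fin n) (Fin n) ℂ → ℝ)
    -- N is a norm …
    (hzero : ∀ A, N A = 0 ↔ A = 0)
    (hsmul : ∀ (c : ℂ) A, N (c • A) = ‖c‖ * N A)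
    (htriangle : ∀ A B, N (A + B) ≤ N A + N B)
    -- … which is unitarily invariant
    (hinv : ∀ U V : Matrix (Fin n) (Fin n) ℂ, U ∈ Matrix.unitaryGroup (Fin n) ℂ →
      V ∈ Matrix.unitaryGroup (Fin n) ℂ → ∀ A, N (U * A * V) = N A)
    (Φ : (Fin n → ℝ) → ℝ)
    (hΦ : Φ = fun x => N (Matrix.diagonal (fun i => (x i : ℂ)))) :
    -- (i) Φ is a symmetric gauge function:
    ((∀ x, Φ x = 0 ↔ x = 0)
      ∧ (∀ (c : ℝ) x, Φ (c • x) = |c| * Φ x)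
      ∧ (∀ x y, Φ (x + y) ≤ Φ x + Φ y)
      ∧ (∀ (σ : Equiv.Perm (Fin n)) x, Φ (x ∘ σ) = Φ x)
      ∧ (∀ ε : Fin n → ℝ, (∀ i, ε i = 1 ∨ ε i = -1) → ∀ x,
          Φ (fun i => ε i * x i) = Φ x))
    -- (ii) N is the gauge function evaluated on singular values:
    ∧ (∀ A : Matrix (Fin n) (Fin n) ℂ, N A = Φ (singVals A)) := by
  subst hΦ
  refine ⟨⟨fun x => ?_, fun c x => ?_, fun x y => ?_, fun σ x => ?_, fun ε hε x => ?_⟩, fun A => ?_⟩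
  · simp only [hzero, diagonal_eq_zero, funext_iff, Pi.zero_apply, Complex.ofReal_eq_zero]
  · beta_reduce
    rw [show (fun i => (((c • x) i : ℝ) : ℂ)) = (c : ℂ) • fun i => (x i : ℂ) by ext; simp,
      diagonal_smul, hsmul, Complex.norm_real, Real.norm_eq_abs]
  · simpa only [Pi.add_apply, Complex.ofReal_add, ← diagonal_add] using htriangle _ _
  · have hconj := hinv _ _ (permMatrix_mem_unitaryGroup σ) (permMatrix_mem_unitaryGroup σ⁻¹)
      (diagonal fun i => (x i : ℂ))
    rwa [permMatrix_mul_diagonal_mul_permMatrix_inv] at hconj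
  · have hεU : diagonal (fun i => (ε i : ℂ)) ∈ unitaryGroup (Fin n) ℂ :=
      diagonal_mem_unitaryGroup fun i => by rcases hε i with h | h <;> simp [h]
    simpa only [mul_one, diagonal_mul_diagonal, Complex.ofReal_mul] using
      hinv _ 1 hεU (one_mem _) (diagonal fun i => (x i : ℂ))
  · obtain ⟨U, hU, V, hV, hA⟩ := exists_mem_unitaryGroup_eq_mul_diagonal_singVals_mul A
    conv_lhs => rw [hA]
    exact hinv U V hU hV _
end
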